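/- arXiv:1807.11912 — 7 statements merged into one kernel-verified Lean document; each statement's English description precedes it below -/
import Mathlib

section
/- Let A have a formal equilibrium q ∈ Δ^{n−1}. Define T_x = x𝟙ᵗ − I, D_x = diag(x_i), π_A(x) = −T_x D_x A D_x T_xᵗ, and H_q(x) = Σᵢ q_i log x_i. Then for every x in the interior of Δ^{n−1}, X_A(x) = π_A(x) d_x H_q, where d_x H_q = (q_1/x_1, …, q_n/x_n)ᵗ. -/
open Matrix BigOperators

/-- With a formal equilibrium q, X_A(x) = π_A(x) d_x H_q on the interior of the simplex,
where π_A(x) = -T_x D_x A D_x T_xᵗ, T_x = x𝟙ᵗ - I, and d_x H_q = (qᵢ/xᵢ)ᵢ. -/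
theorem replicator_eq_piA_mulVec_dHq (n : ℕ) (A : Matrix (Fin n) (Fin n) ℝ)
    (q : Fin n → ℝ) (hq0 : ∀ i, 0 ≤ q i) (hq1 : ∑ i, q i = 1)
    (hformal : ∀ i j, (A.mulVec q) i = (A.mulVec q) j)
    (x : Fin n → ℝ) (hx1 : ∑ i, x i = 1) (hx0 : ∀ i, 0 < x i) :
    (fun i => x i * ((A.mulVec x) i - x ⬝ᵥ A.mulVec x)) =
      (-(((Matrix.of fun i _ => x i) - 1) * Matrix.diagonal x * A *
          Matrix.diagonal x * ((Matrix.of fun i _ => x i) - 1)ᵀ)).mulVec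
        (fun i => q i / x i) := by
  set T : Matrix (Fin n) (Fin n) ℝ := (Matrix.of fun i _ => x i) - 1 with hT
  set D : Matrix (Fin n) (Fin n) ℝ := Matrix.diagonal x with hD
  set v : Fin n → ℝ := fun i => q i / x i with hv
  have step : (T * D * A * D * Tᵀ).mulVec v
      = T.mulVec (D.mulVec (A.mulVec (D.mulVec (Tᵀ.mulVec v)))) := by
    simp [Matrix.mulVec_mulVec, Matrix.mul_assoc]
  have h1 : Tᵀ.mulVec v = fun k => 1 - v k := by
    funext k
    have : ∀ j, x j * v j = q j := fun j => by
      simp only [hv]; exact mul_div_cancel₀ (q j) (hx0 j).ne'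
    simp only [Matrix.mulVec, dotProduct, Matrix.transpose_apply, hT,
      Matrix.sub_apply, Matrix.one_apply, Matrix.of_apply, sub_mul,
      Finset.sum_sub_distrib, ite_mul, one_mul, zero_mul]
    rw [Finset.sum_congr rfl (fun j _ => this j), hq1]
    simp [Finset.sum_ite_eq]
  have h2 : D.mulVec (fun k => 1 - v k) = fun k => x k - q k := by
    funext k
    have : x k * v k = q k := by
      simp only [hv]; exact mul_div_cancel₀ (q k) (hx0 k).ne'
    simp [hD, Matrix.mulVec_diagonal, mul_sub, this]
  have h3 : A.mulVec (fun k => x k - q k)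
      = fun k => A.mulVec x k - A.mulVec q k := by
    funext k
    simp [Matrix.mulVec, dotProduct, mul_sub, Finset.sum_sub_distrib]
  have h4 : D.mulVec (fun k => A.mulVec x k - A.mulVec q k)
      = fun k => x k * (A.mulVec x k - A.mulVec q k) := by
    funext k; simp [hD, Matrix.mulVec_diagonal]
  funext i
  rw [Matrix.neg_mulVec, step, h1, h2, h3, h4]
  have hTw : ∀ (w : Fin n → ℝ), T.mulVec w i = x i * (∑ j, w j) - w i := by
    intro w
    simp only [Matrix.mulVec, dotProduct, hT, Matrix.sub_apply, Matrix.one_apply,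
      Matrix.of_apply, sub_mul, Finset.sum_sub_distrib, ite_mul, one_mul, zero_mul,
      Finset.mul_sum]
    simp [Finset.sum_ite_eq]
  simp only [Pi.neg_apply, hTw]
  have hc : ∀ j, A.mulVec q j = A.mulVec q i := fun j => hformal j i
  have hsum : ∑ j, x j * (A.mulVec x j - A.mulVec q j)
      = x ⬝ᵥ A.mulVec x - A.mulVec q i := by
    simp only [mul_sub, Finset.sum_sub_distrib]
    congr 1
    rw [Finset.sum_congr rfl (fun j _ => by rw [hc j]), ← Finset.sum_mul, hx1, one_mul]
  rw [hsum]
  ring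
end

section
/- With ϕ as above, E the (n−1)×n matrix with E_{ii} = −1, E_{in} = 1 and zero otherwise, and B = −EAEᵗ, one has for every u ∈ ℝ^{n−1} and x = ϕ(u): (d_uϕ) B (d_uϕ)ᵗ = −T_x D_x A D_x T_xᵗ, where T_x = x𝟙ᵗ − I and D_x = diag(x_i). -/
set_option maxHeartbeats 1000000

open Matrix BigOperators

/-- (d_uφ) B (d_uφ)ᵗ = -T_x D_x A D_x T_xᵗ where x = φ(u), B = -E A Eᵗ. -/
theorem jacobian_conjugation_identity (n : ℕ) (A : Matrix (Fin (n + 1)) (Fin (n + 1)) ℝ)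
    (u : Fin n → ℝ) :
    let S : (Fin n → ℝ) → ℝ := fun v => 1 + ∑ i, Real.exp (v i)
    let φ : (Fin n → ℝ) → (Fin (n + 1) → ℝ) := fun v =>
      Fin.snoc (fun i => Real.exp (v i) / S v) (1 / S v)
    let E : Matrix (Fin n) (Fin (n + 1)) ℝ :=
      Matrix.of fun i j => if j = i.castSucc then -1 else if j = Fin.last n then 1 else 0
    let B : Matrix (Fin n) (Fin n) ℝ := -(E * A * Eᵀ)
    let J : Matrix (Fin (n + 1)) (Fin n) ℝ :=
      LinearMap.toMatrix' ((fderiv ℝ φ u : (Fin n → ℝ) →L[ℝ] (Fin (n + 1) → ℝ)) :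
        (Fin n → ℝ) →ₗ[ℝ] (Fin (n + 1) → ℝ))
    let x := φ u
    J * B * Jᵀ =
      -(((Matrix.of fun i _ => x i) - 1) * Matrix.diagonal x * A *
        Matrix.diagonal x * ((Matrix.of fun i _ => x i) - 1)ᵀ) := by
  intro S φ E B J x
  have hSpos : 0 < S u := by
    have h0 : (0:ℝ) ≤ ∑ i, Real.exp (u i) :=
      Finset.sum_nonneg fun i _ => (Real.exp_pos _).le
    simp only [S]; linarith
  have hSne : S u ≠ 0 := ne_of_gt hSpos
  set LS : (Fin n → ℝ) →L[ℝ] ℝ :=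
    ∑ i, Real.exp (u i) • ContinuousLinearMap.proj i with hLS
  have hS : HasFDerivAt S LS u := by
    have h1 : HasFDerivAt (fun v : Fin n → ℝ => ∑ i, Real.exp (v i)) LS u := by
      rw [hLS]
      exact HasFDerivAt.fun_sum fun i _ => (hasFDerivAt_apply i u).exp
    simpa only [S] using h1.const_add 1
  have hinv : HasFDerivAt (fun v => (S v)⁻¹) (-((S u ^ 2)⁻¹ • LS)) u := by
    have := (hasDerivAt_inv hSne).comp_hasFDerivAt u hS
    simpa [Function.comp_def] using this
  set D : ∀ _ : Fin (n+1), (Fin n → ℝ) →L[ℝ] ℝ :=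
    Fin.snoc
      (fun k => Real.exp (u k) • (-((S u ^ 2)⁻¹ • LS)) +
        (S u)⁻¹ • (Real.exp (u k) • ContinuousLinearMap.proj k))
      (-((S u ^ 2)⁻¹ • LS)) with hD
  have hφ : HasFDerivAt φ (ContinuousLinearMap.pi D) u := by
    rw [hasFDerivAt_pi']
    intro i
    rw [ContinuousLinearMap.proj_pi]
    induction i using Fin.lastCases with
    | last =>
        have : (fun v => φ v (Fin.last n)) = fun v => (S v)⁻¹ := by
          funext v; simp [φ, Fin.snoc_last, one_div]
        rw [this, hD, Fin.snoc_last]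
        exact hinv
    | cast k =>
        have : (fun v => φ v (Fin.castSucc k)) = fun v => Real.exp (v k) * (S v)⁻¹ := by
          funext v; simp [φ, Fin.snoc_castSucc, div_eq_mul_inv]
        rw [this, hD, Fin.snoc_castSucc]
        exact ((hasFDerivAt_apply k u).exp).mul hinv
  have hLSe : ∀ j : Fin n, LS (fun j' => if j' = j then 1 else 0) = Real.exp (u j) := by
    intro j
    simp only [hLS, ContinuousLinearMap.sum_apply, ContinuousLinearMap.smul_apply,
      ContinuousLinearMap.proj_apply, smul_eq_mul, mul_ite, mul_one, mul_zero]
    simp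
  have hxc : ∀ k : Fin n, x (Fin.castSucc k) = Real.exp (u k) / S u := by
    intro k; simp [x, φ, Fin.snoc_castSucc]
  have hxl : x (Fin.last n) = 1 / S u := by simp [x, φ, Fin.snoc_last]
  have hJ : ∀ (i : Fin (n+1)) (j : Fin n),
      J i j = x i * ((if i = Fin.castSucc j then 1 else 0) - x (Fin.castSucc j)) := by
    intro i j
    have hJe : J i j = D i (fun j' => if j' = j then 1 else 0) := by
      simp only [J, hφ.fderiv, LinearMap.toMatrix'_apply, ContinuousLinearMap.coe_coe,
        ContinuousLinearMap.pi_apply]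
      congr 1; funext j'; simp [Pi.single_apply]
    rw [hJe]
    induction i using Fin.lastCases with
    | last =>
        have hne : Fin.last n ≠ Fin.castSucc j := (Fin.castSucc_lt_last j).ne'
        rw [hD, Fin.snoc_last]
        simp only [ContinuousLinearMap.neg_apply, ContinuousLinearMap.smul_apply,
          smul_eq_mul, hLSe, if_neg hne, hxl, hxc]
        rw [sq, mul_inv]
        simp only [div_eq_mul_inv, one_div]
        ring
    | cast k =>
        rw [hD, Fin.snoc_castSucc]
        simp only [ContinuousLinearMap.add_apply, ContinuousLinearMap.neg_apply,
          ContinuousLinearMap.smul_apply,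
          ContinuousLinearMap.proj_apply, smul_eq_mul, hLSe, hxc,
          Fin.castSucc_inj]
        rw [sq, mul_inv]
        simp only [div_eq_mul_inv]
        by_cases hkj : k = j
        · subst hkj; simp only [if_pos rfl]; ring
        · simp only [if_neg hkj, mul_zero]; ring
  have hsum : ∑ j : Fin n, x (Fin.castSucc j) = 1 - x (Fin.last n) := by
    have : ∑ j : Fin n, x (Fin.castSucc j) = (∑ j, Real.exp (u j)) / S u := by
      rw [Finset.sum_div]; exact Finset.sum_congr rfl fun j _ => hxc j
    rw [this, hxl]
    have hSdef : S u = 1 + ∑ i, Real.exp (u i) := rfl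
    field_simp
    linarith [hSdef]
  have hJE : J * E = ((Matrix.of fun i _ => x i) - 1) * Matrix.diagonal x := by
    ext i k
    rw [Matrix.mul_apply, Matrix.mul_apply]
    have hRHS : ∑ j, (((Matrix.of fun i _ => x i) - 1) i j) * Matrix.diagonal x j k
        = (x i - if i = k then 1 else 0) * x k := by
      rw [Finset.sum_eq_single k]
      · simp [Matrix.diagonal, Matrix.one_apply, Matrix.sub_apply]
      · intro b _ hb; simp [Matrix.diagonal, hb]
      · intro h; exact absurd (Finset.mem_univ k) h
    rw [hRHS]
    induction k using Fin.lastCases with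
    | last =>
        have hE : ∀ j : Fin n, E j (Fin.last n) = 1 := by
          intro j
          simp [E, ((Fin.castSucc_lt_last j).ne').symm, (Fin.castSucc_lt_last j).ne']
        simp only [hE, mul_one]
        have hJs : ∑ j, J i j
            = x i * ((∑ j : Fin n, if i = Fin.castSucc j then 1 else 0)
              - ∑ j : Fin n, x (Fin.castSucc j)) := by
          rw [mul_sub, Finset.mul_sum, Finset.mul_sum, ← Finset.sum_sub_distrib]
          exact Finset.sum_congr rfl fun j _ => by rw [hJ i j, mul_sub]
        rw [hJs, hsum]
        induction i using Fin.lastCases with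
        | last =>
            have : (∑ j : Fin n, if Fin.last n = Fin.castSucc j then 1 else 0) = (0:ℝ) := by
              apply Finset.sum_eq_zero
              intro j _; rw [if_neg (Fin.castSucc_lt_last j).ne']
            rw [this]
            simp only [eq_self_iff_true, if_true]
            ring
        | cast i₀ =>
            have : (∑ j : Fin n, if Fin.castSucc i₀ = Fin.castSucc j then 1 else 0) = (1:ℝ) := by
              simp [Fin.castSucc_inj]
            rw [this]
            rw [if_neg (Fin.castSucc_lt_last i₀).ne]
            ring
    | cast k₀ =>
        have hE : ∀ j : Fin n, E j (Fin.castSucc k₀) = if k₀ = j then -1 else 0 := by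
          intro j
          by_cases hj : k₀ = j
          · subst hj; simp [E]
          · have hcc : Fin.castSucc k₀ ≠ Fin.castSucc j := fun h => hj (Fin.castSucc_inj.mp h)
            simp [E, hcc, if_neg hj, (Fin.castSucc_lt_last k₀).ne]
        simp only [hE, mul_ite, mul_neg_one, mul_zero]
        rw [Finset.sum_ite_eq Finset.univ k₀ (fun j => -(J i j))]
        simp only [Finset.mem_univ, if_pos]
        rw [hJ i k₀]
        by_cases hik : i = Fin.castSucc k₀
        · subst hik; simp only [if_pos rfl]; ring
        · simp only [if_neg hik]; ring
  calc J * B * Jᵀ = -((J * E) * A * (J * E)ᵀ) := by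
        simp only [B, Matrix.mul_neg, Matrix.neg_mul, Matrix.transpose_mul,
          Matrix.mul_assoc]
    _ = -(((Matrix.of fun i _ => x i) - 1) * Matrix.diagonal x * A *
        Matrix.diagonal x * ((Matrix.of fun i _ => x i) - 1)ᵀ) := by
        rw [hJE]
        simp only [Matrix.transpose_mul, Matrix.diagonal_transpose, Matrix.mul_assoc]
end

section
/- Suppose a vector field on ℝ^{n−1} has the form X̃(u) = B η_q(u) with η_q(u)_i = q_i − e^{u_i}/(1+Σⱼe^{u_j}), and D is an (n−1)×(n−1) matrix such that DB is skew-symmetric and the 1-form (1+Σᵢe^{u_i}) Dᵗ η_q(u) is closed with primitive H_D(u) = Σᵢ (Σₖ d_{ki}q_k) u_i + Σᵢ ((Σₖ d_{ki}q_k) − d_{ii}) e^{u_i}. Then H_D is a constant of motion: ⟨X̃(u), d_u H_D(u)⟩ = 0 for all u. -/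
open Matrix BigOperators

/-- If DB is skew-symmetric and H_D is a primitive of (1+Σe^{uᵢ})Dᵗη_q, then H_D is a
constant of motion for X̃ = Bη_q : ⟨X̃(u), d_uH_D(u)⟩ = 0. -/
theorem HD_constant_of_motion (n : ℕ) (q : Fin n → ℝ)
    (B D : Matrix (Fin n) (Fin n) ℝ)
    (hskew : D * B + (D * B)ᵀ = 0)
    (η : (Fin n → ℝ) → (Fin n → ℝ))
    (hη : ∀ u i, η u i = q i - Real.exp (u i) / (1 + ∑ j, Real.exp (u j)))
    (H : (Fin n → ℝ) → ℝ)
    (hH : H = fun u => (∑ i, (∑ k, D k i * q k) * u i)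
        + ∑ i, ((∑ k, D k i * q k) - D i i) * Real.exp (u i))
    (hgrad : ∀ u i, fderiv ℝ H u (Pi.single i 1)
        = (1 + ∑ j, Real.exp (u j)) * (Dᵀ.mulVec (η u)) i) :
    ∀ u, (B.mulVec (η u)) ⬝ᵥ (fun i => fderiv ℝ H u (Pi.single i 1)) = 0 := by
  intro u
  set x := η u
  set c := (1 + ∑ j, Real.exp (u j))
  have h1 : (B.mulVec x) ⬝ᵥ (fun i => fderiv ℝ H u (Pi.single i 1))
      = c * ((B.mulVec x) ⬝ᵥ (Dᵀ.mulVec x)) := by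
    simp only [dotProduct, hgrad]
    rw [Finset.mul_sum]
    congr 1; ext i; ring
  rw [h1]
  have h2 : (B.mulVec x) ⬝ᵥ (Dᵀ.mulVec x) = x ⬝ᵥ ((D * B).mulVec x) := by
    rw [mulVec_transpose, dotProduct_comm, dotProduct_mulVec, ← mulVec_mulVec,
      dotProduct_mulVec, dotProduct_mulVec]
  have h3 : x ⬝ᵥ ((D * B).mulVec x) = 0 := by
    have h4 : (D * B) = -(D * B)ᵀ := eq_neg_of_add_eq_zero_left hskew
    have h5 : x ⬝ᵥ ((D * B)ᵀ.mulVec x) = x ⬝ᵥ ((D * B).mulVec x) := by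
      rw [mulVec_transpose, dotProduct_mulVec, dotProduct_comm]
    nlinarith [h5, congrArg (fun M => x ⬝ᵥ (Matrix.mulVec M x)) h4,
      (by rw [neg_mulVec, dotProduct_neg] : x ⬝ᵥ ((-(D*B)ᵀ).mulVec x) = -(x ⬝ᵥ ((D*B)ᵀ.mulVec x)))]
  rw [h2, h3, mul_zero]
end

section
/- Closedness condition: the 1-form (1 + Σᵢ e^{u_i}) Dᵗ η_q(u) on ℝ^{n−1}, with η_q(u)_i = q_i − e^{u_i}/(1+Σⱼe^{u_j}), is closed (i.e., is an exact differential) if and only if the matrix Dᵗ Q₁ is diagonal, where Q₁ is the (n−1)×(n−1) matrix with (Q₁)_{ij} = q_i − δ_{ij}. -/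
open Matrix BigOperators

lemma aux_fderiv_sum_exp (n : ℕ) (c : ℝ) (a : Fin n → ℝ) (u : Fin n → ℝ) (j : Fin n) :
    fderiv ℝ (fun v : Fin n → ℝ => c + ∑ k, a k * Real.exp (v k)) u (Pi.single j 1)
      = a j * Real.exp (u j) := by
  have h1 : HasFDerivAt (fun v : Fin n → ℝ => c + ∑ k, a k * Real.exp (v k))
      (∑ k, a k • (Real.exp (u k) • (ContinuousLinearMap.proj k : (Fin n → ℝ) →L[ℝ] ℝ))) u := by
    apply HasFDerivAt.const_add
    apply HasFDerivAt.fun_sum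
    intro k _
    have hk : HasFDerivAt (fun v : Fin n → ℝ => v k)
        (ContinuousLinearMap.proj k : (Fin n → ℝ) →L[ℝ] ℝ) u :=
      (hasFDerivAt_apply k u)
    exact hk.exp.const_mul _
  rw [h1.fderiv]
  simp [ContinuousLinearMap.sum_apply, Pi.single_apply, Finset.sum_ite_eq', mul_comm]

/-- The 1-form (1+Σe^{uᵢ})Dᵗη_q is closed iff DᵗQ₁ is diagonal, (Q₁)ᵢⱼ = qᵢ - δᵢⱼ. -/
theorem one_form_closed_iff_diagonal (n : ℕ) (q : Fin n → ℝ)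
    (D : Matrix (Fin n) (Fin n) ℝ) :
    let η : (Fin n → ℝ) → (Fin n → ℝ) := fun u i =>
      q i - Real.exp (u i) / (1 + ∑ j, Real.exp (u j))
    let ω : (Fin n → ℝ) → (Fin n → ℝ) := fun u =>
      (1 + ∑ j, Real.exp (u j)) • Dᵀ.mulVec (η u)
    let Q₁ : Matrix (Fin n) (Fin n) ℝ :=
      Matrix.of fun i j => q i - if i = j then 1 else 0
    ((∀ u : Fin n → ℝ, ∀ i j,
        fderiv ℝ (fun v => ω v i) u (Pi.single j 1)
          = fderiv ℝ (fun v => ω v j) u (Pi.single i 1)) ↔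
      (∀ i j, i ≠ j → (Dᵀ * Q₁) i j = 0)) := by
  intro η ω Q₁
  set c : Fin n → ℝ := fun i => ∑ k, D k i * q k with hc
  have hAeq : ∀ i j, (Dᵀ * Q₁) i j = c i - D j i := by
    intro i j
    simp [Matrix.mul_apply, Q₁, Matrix.transpose_apply, mul_sub, mul_ite,
      Finset.sum_sub_distrib, hc]
  have hpos : ∀ u : Fin n → ℝ, (0:ℝ) < 1 + ∑ j, Real.exp (u j) := by
    intro u; positivity
  have hω : ∀ (v : Fin n → ℝ) i,
      ω v i = c i + ∑ k, (Dᵀ * Q₁) i k * Real.exp (v k) := by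
    intro v i
    have hS := (hpos v).ne'
    simp only [ω, η, Pi.smul_apply, Matrix.mulVec, dotProduct, smul_eq_mul,
      Matrix.transpose_apply]
    rw [Finset.mul_sum]
    have key : ∀ k, (1 + ∑ j, Real.exp (v j)) *
        (D k i * (q k - Real.exp (v k) / (1 + ∑ j, Real.exp (v j))))
        = D k i * q k + (∑ j, Real.exp (v j)) * (D k i * q k)
          - D k i * Real.exp (v k) := by
      intro k; field_simp
    rw [Finset.sum_congr rfl fun k _ => key k]
    simp only [hAeq, sub_mul]
    rw [Finset.sum_sub_distrib, Finset.sum_sub_distrib, Finset.sum_add_distrib,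
      ← Finset.mul_sum, ← Finset.mul_sum]
    have hcc : ∑ k, D k i * q k = c i := by rw [hc]
    rw [hcc]
    ring
  have hderiv : ∀ (u : Fin n → ℝ) i j,
      fderiv ℝ (fun v => ω v i) u (Pi.single j 1)
        = (Dᵀ * Q₁) i j * Real.exp (u j) := by
    intro u i j
    have hf : (fun v => ω v i)
        = fun v => c i + ∑ k, (Dᵀ * Q₁) i k * Real.exp (v k) :=
      funext fun v => hω v i
    rw [hf, aux_fderiv_sum_exp]
  constructor
  · intro h i j hij
    have h0 := h 0 i j
    rw [hderiv, hderiv] at h0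
    simp only [Pi.zero_apply, Real.exp_zero, mul_one] at h0
    have h1 := h (Pi.single j 1) i j
    rw [hderiv, hderiv] at h1
    rw [Pi.single_eq_same, Pi.single_eq_of_ne hij] at h1
    rw [h0] at h1
    have he : Real.exp 1 ≠ Real.exp 0 := fun hcon =>
      one_ne_zero (Real.exp_injective hcon)
    have hz : (Dᵀ * Q₁) j i * (Real.exp 1 - Real.exp 0) = 0 := by
      rw [mul_sub, h1, sub_self]
    rcases mul_eq_zero.mp hz with h' | h'
    · rw [h0]; exact h'
    · exact absurd (sub_eq_zero.mp h') he
  · intro h u i j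
    rcases eq_or_ne i j with rfl | hij
    · rfl
    · rw [hderiv, hderiv, h i j hij, h j i hij.symm, zero_mul, zero_mul]
end

section
/- Explicit solution of the diagonality condition: for q = (q₁,…,q_{n−1}) with all q_i > 0 and q_n = 1 − Σq_i > 0, the matrix Q̄₁ with (Q̄₁)_{ii} = (q_i + q_n)/q_i and (Q̄₁)_{ij} = 1 for i ≠ j satisfies: Q̄₁ᵗ Q₁ is diagonal, where (Q₁)_{ij} = q_i − δ_{ij}. -/
open Matrix BigOperators

/-- For q with all qᵢ > 0 and qₙ = 1 - Σqᵢ > 0, the matrix Q̄₁ with diagonal entries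
(qᵢ+qₙ)/qᵢ and off-diagonal entries 1 satisfies: Q̄₁ᵗQ₁ is diagonal. -/
theorem Qbar_transpose_Q1_diagonal (m : ℕ) (q : Fin m → ℝ)
    (hq : ∀ i, 0 < q i) (hqn : 0 < 1 - ∑ i, q i) :
    let qn : ℝ := 1 - ∑ i, q i
    let Q₁ : Matrix (Fin m) (Fin m) ℝ :=
      Matrix.of fun i j => q i - if i = j then 1 else 0
    let Qb : Matrix (Fin m) (Fin m) ℝ :=
      Matrix.of fun i j => if i = j then (q i + qn) / q i else 1
    ∀ i j, i ≠ j → (Qbᵀ * Q₁) i j = 0 := by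
  intro qn Q₁ Qb i j hij
  have hqi : q i ≠ 0 := (hq i).ne'
  have hQb : ∀ k, Qb k i = (if k = i then (q k + qn) / q k else 1) := fun k => rfl
  have hQ : ∀ k, Q₁ k j = q k - if k = j then 1 else 0 := fun k => rfl
  simp only [Matrix.mul_apply, Matrix.transpose_apply, hQb, hQ]
  rw [Finset.sum_eq_add_sum_sdiff_singleton_of_mem (Finset.mem_univ i)
    (fun k => (if k = i then (q k + qn) / q k else 1) * (q k - if k = j then 1 else 0))]
  have h1 : ∀ k ∈ Finset.univ \ {i},
      (if k = i then (q k + qn) / q k else 1) * (q k - if k = j then 1 else 0)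
        = q k - if k = j then 1 else 0 := by
    intro k hk
    simp only [Finset.mem_sdiff, Finset.mem_singleton] at hk
    rw [if_neg hk.2, one_mul]
  rw [Finset.sum_congr rfl h1, if_pos rfl, if_neg hij, sub_zero,
    div_mul_cancel₀ _ hqi, Finset.sum_sub_distrib]
  rw [Finset.sum_ite_eq' (Finset.univ \ {i}) j (fun _ => (1:ℝ))]
  simp only [Finset.mem_sdiff, Finset.mem_univ, Finset.mem_singleton, true_and,
    Ne.symm hij, not_false_iff, if_pos]
  have hsum : ∑ k ∈ Finset.univ \ {i}, q k = (∑ k, q k) - q i := by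
    rw [Finset.sum_sdiff_eq_sub (Finset.subset_univ _), Finset.sum_singleton]
  rw [hsum]
  show q i + qn + ((∑ k, q k) - q i - 1) = 0
  simp only [qn]
  ring
end

section
/- Change of variables replicator ↔ Lotka-Volterra: under the map y_i = x_i/x_n (i = 1,…,n−1) from the interior of Δ^{n−1} to ℝ₊^{n−1}, the replicator vector field X_A(x)_i = x_i((Ax)_i − xᵗAx) is pushed forward to x_n · Y_{(A',r)}(y), where Y_{(A',r)}(y)_i = y_i(r_i + Σ_{j=1}^{n−1} a'_{ij}y_j), r_i = a_{in} − a_{nn}, and a'_{ij} = a_{ij} − a_{nj}. That is, for each i ≤ n−1, d/dt(x_i/x_n) along X_A equals x_n · y_i(r_i + Σⱼ a'_{ij}y_j) with y = (x_1/x_n,…,x_{n−1}/x_n). -/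
open Matrix BigOperators

/-- Under yᵢ = xᵢ/xₙ the replicator field X_A is pushed forward to xₙ·Y_{(A',r)}:
d/dt(xᵢ/xₙ) along X_A equals xₙ · yᵢ(rᵢ + Σⱼ a'ᵢⱼ yⱼ). -/
theorem replicator_to_LotkaVolterra (n : ℕ) (A : Matrix (Fin (n + 1)) (Fin (n + 1)) ℝ)
    (x : Fin (n + 1) → ℝ) (hx1 : ∑ i, x i = 1) (hx0 : ∀ i, 0 < x i) :
    let X : Fin (n + 1) → ℝ := fun i => x i * ((A.mulVec x) i - x ⬝ᵥ A.mulVec x)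
    let y : Fin n → ℝ := fun i => x i.castSucc / x (Fin.last n)
    let r : Fin n → ℝ := fun i => A i.castSucc (Fin.last n) - A (Fin.last n) (Fin.last n)
    let A' : Matrix (Fin n) (Fin n) ℝ := Matrix.of fun i j =>
      A i.castSucc j.castSucc - A (Fin.last n) j.castSucc
    ∀ i : Fin n,
      (X i.castSucc * x (Fin.last n) - x i.castSucc * X (Fin.last n)) / (x (Fin.last n)) ^ 2
        = x (Fin.last n) * (y i * (r i + ∑ j, A' i j * y j)) := by
  intro X y r A' i
  have hxn : x (Fin.last n) ≠ 0 := (hx0 _).ne'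
  simp only [X, y, r, A', Matrix.mulVec, dotProduct, Matrix.of_apply]
  rw [div_eq_iff (pow_ne_zero 2 hxn)]
  have hsplit : ∀ f : Fin (n+1) → ℝ, ∑ j, f j = (∑ j : Fin n, f j.castSucc) + f (Fin.last n) :=
    fun f => Fin.sum_univ_castSucc f
  rw [hsplit (fun j => A i.castSucc j * x j), hsplit (fun j => A (Fin.last n) j * x j)]
  have hsum : ∑ j : Fin n, (A i.castSucc j.castSucc - A (Fin.last n) j.castSucc) *
      (x j.castSucc / x (Fin.last n))
      = (∑ j : Fin n, (A i.castSucc j.castSucc * x j.castSucc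
          - A (Fin.last n) j.castSucc * x j.castSucc)) / x (Fin.last n) := by
    rw [Finset.sum_div]
    congr 1; ext j; field_simp
  rw [hsum, Finset.sum_sub_distrib]
  field_simp
  ring
end

section
/- Let B, D ∈ Mat_{m×m}(ℝ) with DB + BᵗDᵗ = 0, and f ∈ C^∞(ℝ^m) nowhere vanishing. For sections X = fBη₁, α = fDᵗη₁, Y = fBη₂, β = fDᵗη₂ (η₁, η₂ : ℝ^m → ℝ^m smooth), the Courant bracket identity holds: [X,Y] = fB(J_{fη₂}Bη₁ − J_{fη₁}Bη₂) and L_Xβ − L_Yα + (1/2)d(α(Y) − β(X)) = fDᵗ(J_{fη₂}Bη₁ − J_{fη₁}Bη₂), where J_F denotes the Jacobian of F. Consequently the subbundle L_{(fB, fDᵗ)}(u) = {(f(u)Bz, f(u)Dᵗz) : z ∈ ℝ^m} is closed under the Courant bracket. -/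
open Matrix BigOperators

variable {m : ℕ}

noncomputable def mvCLM (M : Matrix (Fin m) (Fin m) ℝ) : (Fin m → ℝ) →L[ℝ] (Fin m → ℝ) :=
  LinearMap.toContinuousLinearMap M.mulVecLin

@[simp] lemma mvCLM_apply (M : Matrix (Fin m) (Fin m) ℝ) (v : Fin m → ℝ) :
    mvCLM M v = M.mulVec v := rfl

lemma fderiv_mulVec_comp {g : (Fin m → ℝ) → Fin m → ℝ} {u : Fin m → ℝ}
    (hg : DifferentiableAt ℝ g u) (M : Matrix (Fin m) (Fin m) ℝ) :
    fderiv ℝ (fun v => M.mulVec (g v)) u = (mvCLM M).comp (fderiv ℝ g u) :=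
  ((mvCLM M).hasFDerivAt.comp u hg.hasFDerivAt).fderiv

lemma fderiv_comp_apply {g : (Fin m → ℝ) → Fin m → ℝ} {u : Fin m → ℝ}
    (hg : DifferentiableAt ℝ g u) (i : Fin m) (w : Fin m → ℝ) :
    fderiv ℝ (fun v => g v i) u w = fderiv ℝ g u w i := by
  have := (hasFDerivAt_pi'.1 hg.hasFDerivAt i).fderiv
  rw [this]; rfl

lemma diffAt_dot {a b : (Fin m → ℝ) → Fin m → ℝ} {u : Fin m → ℝ}
    (ha : DifferentiableAt ℝ a u) (hb : DifferentiableAt ℝ b u) :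
    DifferentiableAt ℝ (fun v => a v ⬝ᵥ b v) u := by
  simp only [dotProduct]
  exact DifferentiableAt.fun_sum fun i _ =>
    (differentiableAt_pi.1 ha i).mul (differentiableAt_pi.1 hb i)

lemma fderiv_dot {a b : (Fin m → ℝ) → Fin m → ℝ} {u : Fin m → ℝ}
    (ha : DifferentiableAt ℝ a u) (hb : DifferentiableAt ℝ b u) (w : Fin m → ℝ) :
    fderiv ℝ (fun v => a v ⬝ᵥ b v) u w
      = fderiv ℝ a u w ⬝ᵥ b u + a u ⬝ᵥ fderiv ℝ b u w := by
  have hai : ∀ i, DifferentiableAt ℝ (fun v => a v i) u := fun i => differentiableAt_pi.1 ha i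
  have hbi : ∀ i, DifferentiableAt ℝ (fun v => b v i) u := fun i => differentiableAt_pi.1 hb i
  simp only [dotProduct]
  rw [fderiv_fun_sum (A := fun i v => a v i * b v i) (fun i _ => ((hai i).mul (hbi i)))]
  simp only [ContinuousLinearMap.coe_sum', Finset.sum_apply]
  rw [← Finset.sum_add_distrib]
  congr 1; ext i
  rw [fderiv_fun_mul (hai i) (hbi i)]
  simp only [ContinuousLinearMap.add_apply, ContinuousLinearMap.smul_apply, smul_eq_mul,
    fderiv_comp_apply ha i w, fderiv_comp_apply hb i w]
  ring

/-- Courant bracket identities for sections (X,α) = (fBη₁, fDᵗη₁), (Y,β) = (fBη₂, fDᵗη₂)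
of L_{(fB,fDᵗ)} when DB is skew-symmetric; consequently L_{(fB,fDᵗ)} is closed under
the Courant bracket. -/
theorem courant_bracket_identity (m : ℕ) (B D : Matrix (Fin m) (Fin m) ℝ)
    (hskew : D * B + Bᵀ * Dᵀ = 0)
    (f : (Fin m → ℝ) → ℝ) (hf : ContDiff ℝ (⊤ : ℕ∞) f) (hf0 : ∀ u, f u ≠ 0)
    (η₁ η₂ : (Fin m → ℝ) → (Fin m → ℝ))
    (hη₁ : ContDiff ℝ (⊤ : ℕ∞) η₁) (hη₂ : ContDiff ℝ (⊤ : ℕ∞) η₂) :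
    let X : (Fin m → ℝ) → (Fin m → ℝ) := fun u => f u • B.mulVec (η₁ u)
    let α : (Fin m → ℝ) → (Fin m → ℝ) := fun u => f u • Dᵀ.mulVec (η₁ u)
    let Y : (Fin m → ℝ) → (Fin m → ℝ) := fun u => f u • B.mulVec (η₂ u)
    let β : (Fin m → ℝ) → (Fin m → ℝ) := fun u => f u • Dᵀ.mulVec (η₂ u)
    let ζ : (Fin m → ℝ) → (Fin m → ℝ) := fun u =>
      fderiv ℝ (fun v => f v • η₂ v) u (B.mulVec (η₁ u))
        - fderiv ℝ (fun v => f v • η₁ v) u (B.mulVec (η₂ u))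
    (∀ u, fderiv ℝ Y u (X u) - fderiv ℝ X u (Y u) = f u • B.mulVec (ζ u)) ∧
    (∀ u i,
      (fderiv ℝ (fun v => β v i) u (X u) + β u ⬝ᵥ fderiv ℝ X u (Pi.single i 1))
        - (fderiv ℝ (fun v => α v i) u (Y u) + α u ⬝ᵥ fderiv ℝ Y u (Pi.single i 1))
        + (1 / 2) * fderiv ℝ (fun v => α v ⬝ᵥ Y v - β v ⬝ᵥ X v) u (Pi.single i 1)
      = f u * (Dᵀ.mulVec (ζ u)) i) ∧
    (∀ u, ∃ z : Fin m → ℝ,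
      fderiv ℝ Y u (X u) - fderiv ℝ X u (Y u) = f u • B.mulVec z ∧
      (fun i =>
        (fderiv ℝ (fun v => β v i) u (X u) + β u ⬝ᵥ fderiv ℝ X u (Pi.single i 1))
          - (fderiv ℝ (fun v => α v i) u (Y u) + α u ⬝ᵥ fderiv ℝ Y u (Pi.single i 1))
          + (1 / 2) * fderiv ℝ (fun v => α v ⬝ᵥ Y v - β v ⬝ᵥ X v) u (Pi.single i 1))
        = f u • Dᵀ.mulVec z) := by
  intro X α Y β ζ
  -- the "combined" sections
  set g₁ : (Fin m → ℝ) → Fin m → ℝ := fun v => f v • η₁ v with hg₁def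
  set g₂ : (Fin m → ℝ) → Fin m → ℝ := fun v => f v • η₂ v with hg₂def
  have hg₁ : Differentiable ℝ g₁ := (hf.smul hη₁).differentiable (by simp)
  have hg₂ : Differentiable ℝ g₂ := (hf.smul hη₂).differentiable (by simp)
  have hXdef : X = fun v => B.mulVec (g₁ v) := by
    funext v; simp [X, hg₁def, Matrix.mulVec_smul]
  have hYdef : Y = fun v => B.mulVec (g₂ v) := by
    funext v; simp [Y, hg₂def, Matrix.mulVec_smul]
  have hαdef : α = fun v => Dᵀ.mulVec (g₁ v) := by
    funext v; simp [α, hg₁def, Matrix.mulVec_smul]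
  have hβdef : β = fun v => Dᵀ.mulVec (g₂ v) := by
    funext v; simp [β, hg₂def, Matrix.mulVec_smul]
  -- matrix algebra lemmas
  have lem1 : ∀ w v : Fin m → ℝ, Dᵀ.mulVec w ⬝ᵥ B.mulVec v = w ⬝ᵥ (D * B).mulVec v := by
    intro w v
    rw [Matrix.mulVec_transpose, ← Matrix.dotProduct_mulVec, Matrix.mulVec_mulVec]
  have hDB : (D * B)ᵀ = -(D * B) := by
    rw [Matrix.transpose_mul]
    exact eq_neg_of_add_eq_zero_right hskew
  have lemskew : ∀ w v : Fin m → ℝ,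
      w ⬝ᵥ (D * B).mulVec v = -(v ⬝ᵥ (D * B).mulVec w) := by
    intro w v
    rw [Matrix.dotProduct_mulVec,
      show w ᵥ* (D * B) = (D * B)ᵀ.mulVec w from (Matrix.mulVec_transpose _ _).symm,
      hDB, Matrix.neg_mulVec, neg_dotProduct, dotProduct_comm]
  -- the pairing function
  have hpair : (fun v => α v ⬝ᵥ Y v - β v ⬝ᵥ X v)
      = fun v => 2 * (g₁ v ⬝ᵥ (D * B).mulVec (g₂ v)) := by
    funext v
    rw [hαdef, hβdef, hXdef, hYdef]
    simp only
    rw [lem1, lem1, lemskew (g₂ v) (g₁ v)]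
    ring
  -- Part 1
  have h1 : ∀ u, fderiv ℝ Y u (X u) - fderiv ℝ X u (Y u) = f u • B.mulVec (ζ u) := by
    intro u
    have hfX : fderiv ℝ X u = (mvCLM B).comp (fderiv ℝ g₁ u) := by
      rw [hXdef]; exact fderiv_mulVec_comp (hg₁ u) B
    have hfY : fderiv ℝ Y u = (mvCLM B).comp (fderiv ℝ g₂ u) := by
      rw [hYdef]; exact fderiv_mulVec_comp (hg₂ u) B
    have hXu : X u = f u • B.mulVec (η₁ u) := rfl
    have hYu : Y u = f u • B.mulVec (η₂ u) := rfl
    have hζu : ζ u = fderiv ℝ g₂ u (B.mulVec (η₁ u)) - fderiv ℝ g₁ u (B.mulVec (η₂ u)) := rfl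
    rw [hfX, hfY, hζu]
    simp only [ContinuousLinearMap.comp_apply, hXu, hYu, _root_.map_smul, mvCLM_apply,
      Matrix.mulVec_smul, Matrix.mulVec_sub, smul_sub]
  -- Part 2
  have h2 : ∀ u i,
      (fderiv ℝ (fun v => β v i) u (X u) + β u ⬝ᵥ fderiv ℝ X u (Pi.single i 1))
        - (fderiv ℝ (fun v => α v i) u (Y u) + α u ⬝ᵥ fderiv ℝ Y u (Pi.single i 1))
        + (1 / 2) * fderiv ℝ (fun v => α v ⬝ᵥ Y v - β v ⬝ᵥ X v) u (Pi.single i 1)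
      = f u * (Dᵀ.mulVec (ζ u)) i := by
    intro u i
    have hfX : fderiv ℝ X u = (mvCLM B).comp (fderiv ℝ g₁ u) := by
      rw [hXdef]; exact fderiv_mulVec_comp (hg₁ u) B
    have hfY : fderiv ℝ Y u = (mvCLM B).comp (fderiv ℝ g₂ u) := by
      rw [hYdef]; exact fderiv_mulVec_comp (hg₂ u) B
    have hXu : X u = f u • B.mulVec (η₁ u) := rfl
    have hYu : Y u = f u • B.mulVec (η₂ u) := rfl
    have hζu : ζ u = fderiv ℝ g₂ u (B.mulVec (η₁ u)) - fderiv ℝ g₁ u (B.mulVec (η₂ u)) := rfl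
    have hdDg₂ : DifferentiableAt ℝ (fun v => Dᵀ.mulVec (g₂ v)) u :=
      ((mvCLM Dᵀ).differentiable.comp hg₂) u
    have hdDg₁ : DifferentiableAt ℝ (fun v => Dᵀ.mulVec (g₁ v)) u :=
      ((mvCLM Dᵀ).differentiable.comp hg₁) u
    have hA1 : fderiv ℝ (fun v => β v i) u (X u)
        = f u * Dᵀ.mulVec (fderiv ℝ g₂ u (B.mulVec (η₁ u))) i := by
      rw [hβdef]
      rw [fderiv_comp_apply hdDg₂ i (X u), fderiv_mulVec_comp (hg₂ u) Dᵀ]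
      simp only [ContinuousLinearMap.comp_apply, hXu, _root_.map_smul, mvCLM_apply,
        Matrix.mulVec_smul, Pi.smul_apply, smul_eq_mul]
    have hA3 : fderiv ℝ (fun v => α v i) u (Y u)
        = f u * Dᵀ.mulVec (fderiv ℝ g₁ u (B.mulVec (η₂ u))) i := by
      rw [hαdef]
      rw [fderiv_comp_apply hdDg₁ i (Y u), fderiv_mulVec_comp (hg₁ u) Dᵀ]
      simp only [ContinuousLinearMap.comp_apply, hYu, _root_.map_smul, mvCLM_apply,
        Matrix.mulVec_smul, Pi.smul_apply, smul_eq_mul]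
    have hdb : DifferentiableAt ℝ (fun v => (D * B).mulVec (g₂ v)) u :=
      ((mvCLM (D * B)).differentiable.comp hg₂) u
    have hA5 : fderiv ℝ (fun v => α v ⬝ᵥ Y v - β v ⬝ᵥ X v) u (Pi.single i 1)
        = 2 * (fderiv ℝ g₁ u (Pi.single i 1) ⬝ᵥ (D * B).mulVec (g₂ u)
            + g₁ u ⬝ᵥ (D * B).mulVec (fderiv ℝ g₂ u (Pi.single i 1))) := by
      rw [hpair, fderiv_const_mul (diffAt_dot (hg₁ u) hdb) 2]
      rw [ContinuousLinearMap.smul_apply, smul_eq_mul]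
      congr 1
      rw [fderiv_dot (hg₁ u) hdb, fderiv_mulVec_comp (hg₂ u) (D * B)]
      rfl
    rw [hA1, hA3, hA5, hfX, hfY, hζu]
    simp only [ContinuousLinearMap.comp_apply, mvCLM_apply, hαdef, hβdef,
      Matrix.mulVec_sub, Pi.sub_apply]
    rw [lem1 (g₂ u), lem1 (g₁ u),
      lemskew (fderiv ℝ g₁ u (Pi.single i 1)) (g₂ u)]
    ring
  refine ⟨h1, h2, fun u => ⟨ζ u, h1 u, funext fun i => ?_⟩⟩
  rw [h2 u i]; simp
end
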